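/- arXiv:2309.05199 — 6 statements merged into one kernel-verified Lean document; each statement's English description precedes it below -/
import Mathlib

section
/- Let G be a (P₃∪P₂, K₄)-free graph and let D₁ := {x ∈ V(G) : ω(G − N(x)) ≤ 2}. If the induced subgraph G[D₁] contains P₂∪P₁ (i.e., there are vertices v₁, v₂, v₃ ∈ D₁ with v₁ adjacent to v₂ and v₃ adjacent to neither v₁ nor v₂), then χ(G) ≤ 7. -/
open SimpleGraph

/-- `G` contains `H`, i.e. `H` is isomorphic to an induced subgraph of `G`. -/
def Contains {V W : Type*} (G : SimpleGraph V) (H : SimpleGraph W) : Prop :=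
  Nonempty (H ↪g G)

/-- The path `P₃` on 3 vertices. -/
def P3 : SimpleGraph (Fin 3) := fromEdgeSet {s(0,1), s(1,2)}

/-- The disjoint union `P₃ ∪ P₂` on 5 vertices. -/
def P3P2 : SimpleGraph (Fin 5) := fromEdgeSet {s(0,1), s(1,2), s(3,4)}

/-- The disjoint union `K₃ ∪ P₂` on 5 vertices. -/
def K3P2 : SimpleGraph (Fin 5) := fromEdgeSet {s(0,1), s(0,2), s(1,2), s(3,4)}

/-- co-domino: the 6-cycle u₁v₁v₂v₃u₃u₂ (vertices 0 1 2 3 4 5) plus the edges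
v₁v₃ and u₁u₃. -/
def coDomino : SimpleGraph (Fin 6) :=
  fromEdgeSet {s(0,1), s(1,2), s(2,3), s(3,4), s(4,5), s(5,0), s(1,3), s(0,4)}

/-- co-A: the 6-cycle u₁v₁v₂v₃u₃u₂ (vertices 0 1 2 3 4 5) plus the edges
v₁v₃, u₁u₃ and u₁v₃. -/
def coA : SimpleGraph (Fin 6) :=
  fromEdgeSet {s(0,1), s(1,2), s(2,3), s(3,4), s(4,5), s(5,0), s(1,3), s(0,4), s(0,3)}

/-- χ37: the 6-cycle u₁v₁v₂v₃u₃u₂ (vertices 0 1 2 3 4 5) plus the single edge v₁v₃. -/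
def chi37 : SimpleGraph (Fin 6) :=
  fromEdgeSet {s(0,1), s(1,2), s(2,3), s(3,4), s(4,5), s(5,0), s(1,3)}

/-- X₁: the 6-cycle v₁v₂v₃u₃u₂u₁ (vertices 0 1 2 3 4 5) plus the edge v₁v₃,
together with a new vertex u = 6 and the edges uv₁ and uu₂. -/
def X1 : SimpleGraph (Fin 7) :=
  fromEdgeSet {s(0,1), s(1,2), s(2,3), s(3,4), s(4,5), s(5,0), s(0,2), s(6,0), s(6,4)}

/-- X₂: the 6-cycle v₁v₂v₃u₃u₂u₁ (vertices 0 1 2 3 4 5) plus the edges v₁v₃, v₃u₁, u₁u₃,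
together with a new vertex u = 6 and the edges uv₂ and uu₂. -/
def X2 : SimpleGraph (Fin 7) :=
  fromEdgeSet {s(0,1), s(1,2), s(2,3), s(3,4), s(4,5), s(5,0), s(0,2), s(2,5), s(3,5),
    s(6,1), s(6,4)}

/-- co-twin-C₅: the 5-cycle v₁v₂v₃v₄v₅ (vertices 0 1 2 3 4) plus a new vertex v₆ = 5
adjacent exactly to v₃, v₄ and v₅. -/
def coTwinC5 : SimpleGraph (Fin 6) :=
  fromEdgeSet {s(0,1), s(1,2), s(2,3), s(3,4), s(4,0), s(2,5), s(3,5), s(4,5)}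

/-- `D₁ = {x : ω(G − N(x)) ≤ 2}`, where `G − N(x)` is the subgraph induced on the
vertices not adjacent to `x` (including `x` itself). -/
def D1 {V : Type*} (G : SimpleGraph V) : Set V :=
  {x : V | (G.induce {y : V | ¬ G.Adj x y}).cliqueNum ≤ 2}

/-- `M(v)`: the set of vertices distinct from `v` and nonadjacent to `v`. -/
def Mset {V : Type*} (G : SimpleGraph V) (v : V) : Set V :=
  {u : V | u ≠ v ∧ ¬ G.Adj v u}

/-!
Split the vertices by their adjacency to the edge `v₁v₂`. The common neighbourhood is independent
since `G` is `K₄`-free. On `N(v₁) ∖ N(v₂)` adjacency to `v₃` is a proper 2-colouring: two adjacent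
vertices both adjacent to `v₃` form a triangle with `v₃` outside `N(v₂)`, and two both nonadjacent
to `v₃` form a triangle with `v₁` outside `N(v₃)`; symmetrically on `N(v₂) ∖ N(v₁)`. In the common
non-neighbourhood every vertex has at most one neighbour, since a triangle there would lie outside
`N(v₁)` and an induced `P₃` there together with `v₁v₂` would be an induced `P₃ ∪ P₂`; so it is
2-colourable. Altogether `1 + 2 + 2 + 2 = 7` colours suffice.
-/

namespace SimpleGraph

variable {V : Type*} {G : SimpleGraph V}

theorem cliqueFree_of_not_contains {n : ℕ} (h : ¬ Contains G (completeGraph (Fin n))) :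
    G.CliqueFree n := by
  by_contra hn
  exact h ⟨topEmbeddingOfNotCliqueFree hn⟩

-- `cliqueNum` is an `sSup` in `ℕ`, hence `0` when clique sizes are unbounded; `hG` bounds them.
theorem IsNClique.le_cliqueNum {m n : ℕ} {s : Finset V} (hG : G.CliqueFree m)
    (hs : G.IsNClique n s) : n ≤ G.cliqueNum :=
  le_csSup ⟨m, fun _ ⟨t, ht⟩ => le_of_not_gt fun hmk => hG.mono hmk.le t ht⟩ ⟨s, hs⟩

theorem cliqueFree_three_induce_of_mem_D1 (hG : G.CliqueFree 4) {x : V} (hx : x ∈ D1 G) :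
    (G.induce {y | ¬ G.Adj x y}).CliqueFree 3 := fun t ht =>
  absurd (ht.le_cliqueNum (hG.comap (Embedding.induce _).isContained)) (by
    have : (G.induce {y | ¬ G.Adj x y}).cliqueNum ≤ 2 := hx
    omega)

theorem not_adj_of_mem_D1 (hG : G.CliqueFree 4) {x a b c : V} (hx : x ∈ D1 G)
    (ha : ¬ G.Adj x a) (hb : ¬ G.Adj x b) (hc : ¬ G.Adj x c) (hab : G.Adj a b)
    (hbc : G.Adj b c) : ¬ G.Adj a c := fun hac => by
  classical
  exact cliqueFree_three_induce_of_mem_D1 hG hx {⟨a, ha⟩, ⟨b, hb⟩, ⟨c, hc⟩}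
    (is3Clique_triple_iff.2 (by simp [hab, hac, hbc]))

theorem contains_P3P2 {x y z a b : V} (hxy : G.Adj x y) (hyz : G.Adj y z) (hxz : ¬ G.Adj x z)
    (hne : x ≠ z) (hab : G.Adj a b) (hax : ¬ G.Adj a x) (hay : ¬ G.Adj a y)
    (haz : ¬ G.Adj a z) (hbx : ¬ G.Adj b x) (hby : ¬ G.Adj b y) (hbz : ¬ G.Adj b z) :
    Contains G P3P2 := by
  have hax' : a ≠ x := by rintro rfl; exact hbx hab.symm
  have hay' : a ≠ y := by rintro rfl; exact hby hab.symm
  have haz' : a ≠ z := by rintro rfl; exact hbz hab.symm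
  have hbx' : b ≠ x := by rintro rfl; exact hax hab
  have hby' : b ≠ y := by rintro rfl; exact hay hab
  have hbz' : b ≠ z := by rintro rfl; exact haz hab
  refine ⟨⟨⟨![x, y, z, a, b], fun i j h => ?_⟩, fun {i j} => ?_⟩⟩
  · fin_cases i <;> fin_cases j <;>
      simp_all [eq_comm, hxy.ne, hyz.ne, hab.ne]
  · change G.Adj (![x, y, z, a, b] i) (![x, y, z, a, b] j) ↔ _
    fin_cases i <;> fin_cases j <;>
      simp_all [P3P2, G.adj_comm]

theorem colorable_sum_of_induce_fibers {β : Type*} [Fintype β] (f : V → β) (k : β → ℕ)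
    (h : ∀ b, (G.induce (f ⁻¹' {b})).Colorable (k b)) : G.Colorable (∑ b, k b) := by
  have C := fun b => (h b).some
  let c : V → Σ b, Fin (k b) := fun v => ⟨f v, C (f v) ⟨v, rfl⟩⟩
  have hc : ∀ v b (hv : f v = b), c v = ⟨b, C b ⟨v, hv⟩⟩ := by rintro v b rfl; rfl
  have hcol : G.Coloring (Σ b, Fin (k b)) := Coloring.mk c fun {p q} hpq heq => by
    have hf : f p = f q := (Sigma.mk.inj_iff.1 heq).1
    rw [hc p (f q) hf, hc q (f q) rfl, Sigma.mk.inj_iff] at heq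
    exact (C (f q)).valid (v := ⟨p, hf⟩) (w := ⟨q, rfl⟩) hpq (eq_of_heq heq.2)
  simpa using hcol.colorable

theorem colorable_two_of_subsingleton_neighborSet {W : Type*} {H : SimpleGraph W}
    (h : ∀ v, (H.neighborSet v).Subsingleton) : H.Colorable 2 := by
  classical
  let : LinearOrder W := IsWellOrder.linearOrder WellOrderingRel
  let c : W → Bool := fun v => ∃ u, H.Adj v u ∧ u < v
  have key : ∀ p q, H.Adj p q → p < q → c p = false ∧ c q = true := by
    intro p q hpq hlt
    refine ⟨?_, by simpa [c] using ⟨p, hpq.symm, hlt⟩⟩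
    simp only [c, decide_eq_false_iff_not, not_exists, not_and, not_lt]
    intro u hu
    rw [h p hu hpq]
    exact hlt.le
  have hcol : H.Coloring Bool := Coloring.mk c fun {p q} hpq heq => by
    rcases lt_or_gt_of_ne hpq.ne with hlt | hlt
    · simp [key p q hpq hlt] at heq
    · simp [key q p hpq.symm hlt] at heq
  simpa using hcol.colorable

theorem colorable_one_induce_commonNeighbors (hG : G.CliqueFree 4) {x y : V} (hxy : G.Adj x y) :
    (G.induce (G.commonNeighbors x y)).Colorable 1 := by
  classical
  rw [colorable_one_iff]
  ext ⟨p, hp⟩ ⟨q, hq⟩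
  simp only [comap_adj, Function.Embedding.subtype_apply, bot_adj, iff_false]
  intro hpq
  rw [mem_commonNeighbors] at hp hq
  exact hG {x, y, p, q}
    ((is3Clique_triple_iff.2 ⟨hp.2, hq.2, hpq⟩).insert (by simp [hxy, hp.1, hq.1]))

theorem colorable_two_induce_adj_not_adj (hG : G.CliqueFree 4) {x y z : V} (hy : y ∈ D1 G)
    (hz : z ∈ D1 G) (hzx : ¬ G.Adj z x) (hzy : ¬ G.Adj z y) :
    (G.induce {v | G.Adj x v ∧ ¬ G.Adj y v}).Colorable 2 := by
  classical
  let c : {v | G.Adj x v ∧ ¬ G.Adj y v} → Bool := fun v => G.Adj z v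
  have hcol : (G.induce {v | G.Adj x v ∧ ¬ G.Adj y v}).Coloring Bool :=
    Coloring.mk c <| by
      rintro ⟨p, hxp, hyp⟩ ⟨q, hxq, hyq⟩ hpq heq
      simp only [comap_adj, Function.Embedding.subtype_apply] at hpq
      by_cases hzp : G.Adj z p
      · have hzq : G.Adj z q := by simpa [c, hzp] using heq.symm
        exact not_adj_of_mem_D1 hG hy (fun h => hzy h.symm) hyp hyq hzp hpq hzq
      · have hzq : ¬ G.Adj z q := by simpa [c, hzp] using heq.symm
        exact not_adj_of_mem_D1 hG hz hzx hzp hzq hxp hpq hxq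
  simpa using hcol.colorable

theorem colorable_two_induce_not_adj_not_adj (hP : ¬ Contains G P3P2) (hG : G.CliqueFree 4)
    {x y : V} (hx : x ∈ D1 G) (hxy : G.Adj x y) :
    (G.induce {v | ¬ G.Adj x v ∧ ¬ G.Adj y v}).Colorable 2 := by
  refine colorable_two_of_subsingleton_neighborSet fun ⟨u, hxu, hyu⟩ ⟨w, hxw, hyw⟩ huw
    ⟨z, hxz, hyz⟩ huz => Subtype.ext (by_contra fun hwz => ?_)
  simp only [mem_neighborSet, comap_adj, Function.Embedding.subtype_apply] at huw huz
  exact hP (contains_P3P2 huw.symm huz (not_adj_of_mem_D1 hG hx hxw hxu hxz huw.symm huz) hwz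
    hxy hxw hxu hxz hyw hyu hyz)

end SimpleGraph

theorem chromatic_le_seven_of_P2P1_in_D1_general {V : Type*} (G : SimpleGraph V)
    (hP : ¬ Contains G P3P2) (hK : ¬ Contains G (completeGraph (Fin 4)))
    (v₁ v₂ v₃ : V) (hv₁ : v₁ ∈ D1 G) (hv₂ : v₂ ∈ D1 G) (hv₃ : v₃ ∈ D1 G)
    (hadj : G.Adj v₁ v₂)
    (hn1 : ¬ G.Adj v₃ v₁) (hn2 : ¬ G.Adj v₃ v₂) :
    G.chromaticNumber ≤ 7 := by
  classical
  have hG : G.CliqueFree 4 := cliqueFree_of_not_contains hK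
  let f : V → Bool × Bool := fun v => (G.Adj v₁ v, G.Adj v₂ v)
  let k : Bool × Bool → ℕ := fun | (true, true) => 1 | _ => 2
  have hcol : G.Colorable (∑ b, k b) := by
    refine colorable_sum_of_induce_fibers f k ?_
    rintro ⟨_ | _, _ | _⟩
    · rw [show f ⁻¹' {(false, false)} = {v | ¬ G.Adj v₁ v ∧ ¬ G.Adj v₂ v} by ext; simp [f]]
      exact colorable_two_induce_not_adj_not_adj hP hG hv₁ hadj
    · rw [show f ⁻¹' {(false, true)} = {v | G.Adj v₂ v ∧ ¬ G.Adj v₁ v} by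
        ext; simp [f, and_comm]]
      exact colorable_two_induce_adj_not_adj hG hv₁ hv₃ hn2 hn1
    · rw [show f ⁻¹' {(true, false)} = {v | G.Adj v₁ v ∧ ¬ G.Adj v₂ v} by ext; simp [f]]
      exact colorable_two_induce_adj_not_adj hG hv₂ hv₃ hn1 hn2
    · rw [show f ⁻¹' {(true, true)} = G.commonNeighbors v₁ v₂ by
        ext; simp [f, mem_commonNeighbors]]
      exact colorable_one_induce_commonNeighbors hG hadj
  exact hcol.chromaticNumber_le.trans (by decide)

theorem chromatic_le_seven_of_P2P1_in_D1 {V : Type*} [Fintype V] (G : SimpleGraph V)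
    (hP : ¬ Contains G P3P2) (hK : ¬ Contains G (completeGraph (Fin 4)))
    (v₁ v₂ v₃ : V) (hv₁ : v₁ ∈ D1 G) (hv₂ : v₂ ∈ D1 G) (hv₃ : v₃ ∈ D1 G)
    (hadj : G.Adj v₁ v₂) (h31 : v₃ ≠ v₁) (h32 : v₃ ≠ v₂)
    (hn1 : ¬ G.Adj v₃ v₁) (hn2 : ¬ G.Adj v₃ v₂) :
    G.chromaticNumber ≤ 7 :=
  chromatic_le_seven_of_P2P1_in_D1_general G hP hK v₁ v₂ v₃ hv₁ hv₂ hv₃ hadj hn1 hn2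
end

section
/- Let G be a (P₃∪P₂, K₄)-free graph and let D₁ := {x ∈ V(G) : ω(G − N(x)) ≤ 2}. For any two nonadjacent vertices y₁, y₂ ∈ D₁, the induced subgraph G[N(y₁) \ N(y₂)] has clique number at most 1 (i.e., contains no edge), and likewise G[N(y₂) \ N(y₁)] has clique number at most 1. -/
open SimpleGraph

/-!
Let `S` be the set of non-neighbours of `y₂`, so that `N(y₁) \ N(y₂) = N(y₁) ∩ S` and `y₁ ∈ S`.
Adding `y₁` to a clique of `G[N(y₁) ∩ S]` gives a larger clique of `G[S] = G − N(y₂)`, hence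
`ω(G[N(y₁) \ N(y₂)]) < ω(G − N(y₂)) ≤ 2`.
-/

open Finset

namespace SimpleGraph

variable {V : Type*} {G : SimpleGraph V} {S : Set V} {n : ℕ}

lemma exists_isNClique_cliqueNum_induce :
    ∃ t : Finset V, ↑t ⊆ S ∧ G.IsNClique (G.induce S).cliqueNum t := by
  obtain ⟨t, ht⟩ := (G.induce S).exists_isNClique_cliqueNum
  exact ⟨t.map (.subtype _), by simp, (isNClique_induce_iff S t _).mp ht⟩

lemma IsNClique.le_cliqueNum_induce [Finite V] {t : Finset V} (ht : G.IsNClique n t)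
    (htS : ↑t ⊆ S) : n ≤ (G.induce S).cliqueNum := by
  classical
  have hmap : (t.subtype (· ∈ S)).map (.subtype _) = t := by
    rw [subtype_map, filter_true_of_mem fun x hx => htS hx]
  rw [← hmap, ← isNClique_induce_iff] at ht
  exact ht.card_eq ▸ ht.isClique.card_le_cliqueNum

lemma cliqueNum_induce_neighborSet_inter_lt [Finite V] {v : V} (hv : v ∈ S) :
    (G.induce (G.neighborSet v ∩ S)).cliqueNum < (G.induce S).cliqueNum := by
  classical
  obtain ⟨t, htS, ht⟩ := G.exists_isNClique_cliqueNum_induce (S := G.neighborSet v ∩ S)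
  have hins := ht.insert fun b hb => (htS hb).1
  refine hins.le_cliqueNum_induce ?_
  rw [coe_insert]
  exact Set.insert_subset hv fun b hb => (htS hb).2

end SimpleGraph

lemma cliqueNum_induce_neighborSet_diff_le_one {V : Type*} [Finite V] {G : SimpleGraph V}
    {x y : V} (hy : y ∈ D1 G) (hxy : ¬ G.Adj y x) :
    (G.induce (G.neighborSet x \ G.neighborSet y)).cliqueNum ≤ 1 :=
  Nat.le_of_lt_succ <|
    (cliqueNum_induce_neighborSet_inter_lt (S := {z | ¬ G.Adj y z}) hxy).trans_le hy

theorem cliqueNum_diff_nbhd_le_one_general {V : Type*} [Fintype V] (G : SimpleGraph V)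
    (y₁ y₂ : V) (hy₁ : y₁ ∈ D1 G) (hy₂ : y₂ ∈ D1 G)
    (hnadj : ¬ G.Adj y₁ y₂) :
    (G.induce (G.neighborSet y₁ \ G.neighborSet y₂)).cliqueNum ≤ 1 ∧
      (G.induce (G.neighborSet y₂ \ G.neighborSet y₁)).cliqueNum ≤ 1 :=
  ⟨cliqueNum_induce_neighborSet_diff_le_one hy₂ (mt G.adj_symm hnadj),
    cliqueNum_induce_neighborSet_diff_le_one hy₁ hnadj⟩

theorem cliqueNum_diff_nbhd_le_one {V : Type*} [Fintype V] (G : SimpleGraph V)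
    (hP : ¬ Contains G P3P2) (hK : ¬ Contains G (completeGraph (Fin 4)))
    (y₁ y₂ : V) (hy₁ : y₁ ∈ D1 G) (hy₂ : y₂ ∈ D1 G)
    (hne : y₁ ≠ y₂) (hnadj : ¬ G.Adj y₁ y₂) :
    (G.induce (G.neighborSet y₁ \ G.neighborSet y₂)).cliqueNum ≤ 1 ∧
      (G.induce (G.neighborSet y₂ \ G.neighborSet y₁)).cliqueNum ≤ 1 :=
  cliqueNum_diff_nbhd_le_one_general G y₁ y₂ hy₁ hy₂ hnadj
end

section
/- Let G be a graph whose vertex set is partitioned into three nonempty subsets V₁, V₂, V₃ such that: G[V₁] and G[V₂] are (K₃, P₃)-free; G[V₃] is a stable set; G[V₁∪V₂] is K₃-free; G[Vⱼ∪V₃] is (K₃, P₃)-free for j = 1, 2; for every vertex v ∈ Vᵢ with i ∈ {1,2}, the set M(v) \ Vᵢ contains no edge, where M(v) is the set of vertices distinct from v and nonadjacent to v; and for every vertex v ∈ V₃ and each i ∈ {1,2}, if N(v)∩Vᵢ ≠ ∅ then N(v)∩Vᵢ = {x ∈ Vᵢ : x is not complete to N(v)∩V₃₋ᵢ}. If moreover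 G[V₁] has at most one edge, then χ(G) ≤ 3. -/
open SimpleGraph

/-!
Every edge of `G[V₁]` passes through one vertex `a ∈ V₁`. Colour `a` and the non-neighbours of `a`
outside `V₁` with `0` (a stable set by the condition on `M(a)`), the neighbours of `a` with `1`
(stable because `G[V₁ ∪ V₂]` is triangle-free) and the rest of `V₁` with `2` (stable because its
edges all meet `a`). A vertex of the stable set `V₃` has no neighbour in `V₃` and, as `G[Vⱼ ∪ V₃]`
is `(K₃, P₃)`-free, at most one in each `Vⱼ`; so one of the three colours is free for it.
-/

theorem encard_le_two_of_subset_union {α : Type*} {s A B : Set α} (hs : s ⊆ A ∪ B)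
    (hA : (s ∩ A).Subsingleton) (hB : (s ∩ B).Subsingleton) : s.encard ≤ 2 :=
  calc s.encard ≤ (s ∩ A ∪ s ∩ B).encard :=
        Set.encard_le_encard (Set.inter_union_distrib_left s A B ▸ Set.subset_inter subset_rfl hs)
    _ ≤ (s ∩ A).encard + (s ∩ B).encard := Set.encard_union_le _ _
    _ ≤ 1 + 1 := add_le_add (Set.encard_le_one_iff_subsingleton.mpr hA)
        (Set.encard_le_one_iff_subsingleton.mpr hB)
    _ = 2 := one_add_one_eq_two

section

variable {V : Type*} {G : SimpleGraph V}

theorem contains_induce_of_fin_three {H : SimpleGraph (Fin 3)} {S : Set V} {x y z : V}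
    (hx : x ∈ S) (hy : y ∈ S) (hz : z ∈ S) (hxy : x ≠ y) (hxz : x ≠ z) (hyz : y ≠ z)
    (hadj : ∀ i j, H.Adj i j ↔ G.Adj (![x, y, z] i) (![x, y, z] j)) :
    Contains (G.induce S) H := by
  refine ⟨⟨⟨![⟨x, hx⟩, ⟨y, hy⟩, ⟨z, hz⟩], ?_⟩, ?_⟩⟩
  · intro i j h
    fin_cases i <;> fin_cases j <;> simp_all [Subtype.ext_iff, eq_comm]
  · intro i j
    rw [hadj]
    fin_cases i <;> fin_cases j <;> rfl

theorem contains_completeGraph_three_of_adj {S : Set V} {x y z : V}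
    (hx : x ∈ S) (hy : y ∈ S) (hz : z ∈ S) (hxy : G.Adj x y) (hxz : G.Adj x z) (hyz : G.Adj y z) :
    Contains (G.induce S) (completeGraph (Fin 3)) := by
  refine contains_induce_of_fin_three hx hy hz hxy.ne hxz.ne hyz.ne fun i j => ?_
  fin_cases i <;> fin_cases j <;> simp [hxy, hxz, hyz, hxy.symm, hxz.symm, hyz.symm]

theorem subsingleton_neighborSet_inter {S : Set V}
    (hK : ¬ Contains (G.induce S) (completeGraph (Fin 3))) (hP : ¬ Contains (G.induce S) P3)
    {y : V} (hy : y ∈ S) : (G.neighborSet y ∩ S).Subsingleton := by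
  rintro x ⟨hyx : G.Adj y x, hx⟩ z ⟨hyz : G.Adj y z, hz⟩
  by_contra hxz
  by_cases hxz' : G.Adj x z
  · exact hK (contains_completeGraph_three_of_adj hx hy hz hyx.symm hxz' hyz)
  · refine hP (contains_induce_of_fin_three hx hy hz hyx.ne' hxz hyz.ne ?_)
    intro i j
    fin_cases i <;> fin_cases j <;> simp [P3, hyx, hyz, hyx.symm, hyz.symm, hxz', mt G.adj_symm hxz']

theorem colorable_of_isIndepSet_of_encard_neighborSet_lt {n : ℕ} {S : Set V}
    (hS : G.IsIndepSet S) (c : V → Fin n) (hc : ∀ u v, u ∉ S → v ∉ S → G.Adj u v → c u ≠ c v)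
    (hnbr : ∀ v ∈ S, (G.neighborSet v).encard < n) :
    G.Colorable n := by
  classical
  have hfree : ∀ v ∈ S, ∃ k, k ∉ c '' G.neighborSet v := by
    intro v hv
    by_contra! h
    have hle : (Set.univ : Set (Fin n)).encard ≤ (G.neighborSet v).encard :=
      (Set.encard_le_encard fun k _ => h k).trans (Set.encard_image_le c _)
    simp only [Set.encard_univ, ENat.card_eq_coe_fintype_card, Fintype.card_fin] at hle
    exact (hnbr v hv).not_ge hle
  choose k hk using hfree
  refine ⟨Coloring.mk (fun v => if h : v ∈ S then k v h else c v) fun {u v} huv => ?_⟩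
  by_cases hu : u ∈ S <;> by_cases hv : v ∈ S <;> simp only [hu, hv, dite_true, dite_false]
  · exact absurd huv (hS hu hv huv.ne)
  · exact fun h => hk u hu ⟨v, huv, h.symm⟩
  · exact fun h => hk v hv ⟨u, huv.symm, h⟩
  · exact hc u v hu hv huv

theorem exists_forall_adj_eq_or_eq_of_forall_sym2_eq {T : Set V} (hT : T.Nonempty)
    (hone : ∀ a b c d : V, a ∈ T → b ∈ T → c ∈ T → d ∈ T →
      G.Adj a b → G.Adj c d → s(a,b) = s(c,d)) :
    ∃ a ∈ T, ∀ u ∈ T, ∀ v ∈ T, G.Adj u v → u = a ∨ v = a := by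
  by_cases hE : ∃ a ∈ T, ∃ b ∈ T, G.Adj a b
  · obtain ⟨a, ha, b, hb, hab⟩ := hE
    refine ⟨a, ha, fun u hu v hv huv => ?_⟩
    rcases Sym2.eq_iff.mp (hone u v a b hu hv ha hb huv hab) with ⟨hua, -⟩ | ⟨-, hva⟩
    exacts [Or.inl hua, Or.inr hva]
  · obtain ⟨a, ha⟩ := hT
    exact ⟨a, ha, fun u hu v hv huv => absurd ⟨u, hu, v, hv, huv⟩ hE⟩

theorem exists_fin_three_coloring_of_star {V₁ V₂ : Set V} {a : V} (ha : a ∈ V₁)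
    (hstar : ∀ u ∈ V₁, ∀ v ∈ V₁, G.Adj u v → u = a ∨ v = a)
    (hK : ¬ Contains (G.induce (V₁ ∪ V₂)) (completeGraph (Fin 3)))
    (hM : ∀ x ∈ Mset G a \ V₁, ∀ y ∈ Mset G a \ V₁, ¬ G.Adj x y) :
    ∃ c : V → Fin 3, ∀ u v, u ∈ V₁ ∪ V₂ → v ∈ V₁ ∪ V₂ → G.Adj u v → c u ≠ c v := by
  classical
  let c : V → Fin 3 := fun v => if v = a then 0 else if G.Adj a v then 1 else if v ∈ V₁ then 2 else 0
  have hc0 : ∀ w, c w = 0 → w = a ∨ w ∈ Mset G a \ V₁ := by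
    intro w hw
    simp only [c] at hw
    split_ifs at hw with hwa haw hw1 <;> try simp at hw
    · exact .inl hwa
    · exact .inr ⟨⟨hwa, haw⟩, hw1⟩
  have hc1 : ∀ w, c w = 1 → G.Adj a w := by
    intro w hw
    simp only [c] at hw
    split_ifs at hw with hwa haw <;> try simp at hw
    exact haw
  have hc2 : ∀ w, c w = 2 → w ≠ a ∧ w ∈ V₁ := by
    intro w hw
    simp only [c] at hw
    split_ifs at hw with hwa haw hw1 <;> try simp at hw
    exact ⟨hwa, hw1⟩
  refine ⟨c, fun u v hu hv huv hcuv => ?_⟩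
  obtain hcu | hcu | hcu : c u = 0 ∨ c u = 1 ∨ c u = 2 := by omega
  · rcases hc0 u hcu, hc0 v (hcuv ▸ hcu) with ⟨rfl | hu', rfl | hv'⟩
    · exact huv.ne rfl
    · exact hv'.1.2 huv
    · exact hu'.1.2 huv.symm
    · exact hM u hu' v hv' huv
  · exact hK (contains_completeGraph_three_of_adj (Or.inl ha) hu hv
      (hc1 u hcu) (hc1 v (hcuv ▸ hcu)) huv)
  · obtain ⟨hua, hu1⟩ := hc2 u hcu
    obtain ⟨hva, hv1⟩ := hc2 v (hcuv ▸ hcu)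
    exact (hstar u hu1 v hv1 huv).elim hua hva

end

theorem chromatic_le_three_of_partition_general {V : Type*} (G : SimpleGraph V)
    (V₁ V₂ V₃ : Set V)
    (h1ne : V₁.Nonempty)
    (hcover : V₁ ∪ V₂ ∪ V₃ = Set.univ)
    (hV3stable : ∀ x ∈ V₃, ∀ y ∈ V₃, ¬ G.Adj x y)
    (hV12K3 : ¬ Contains (G.induce (V₁ ∪ V₂)) (completeGraph (Fin 3)))
    (hV13K3 : ¬ Contains (G.induce (V₁ ∪ V₃)) (completeGraph (Fin 3)))
    (hV13P3 : ¬ Contains (G.induce (V₁ ∪ V₃)) P3)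
    (hV23K3 : ¬ Contains (G.induce (V₂ ∪ V₃)) (completeGraph (Fin 3)))
    (hV23P3 : ¬ Contains (G.induce (V₂ ∪ V₃)) P3)
    (hM1 : ∀ v ∈ V₁, ∀ x ∈ Mset G v \ V₁, ∀ y ∈ Mset G v \ V₁, ¬ G.Adj x y)
    (hone : ∀ a b c d : V, a ∈ V₁ → b ∈ V₁ → c ∈ V₁ → d ∈ V₁ →
      G.Adj a b → G.Adj c d → s(a,b) = s(c,d)) :
    G.chromaticNumber ≤ 3 := by
  obtain ⟨a, ha, hstar⟩ := exists_forall_adj_eq_or_eq_of_forall_sym2_eq h1ne hone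
  obtain ⟨c, hc⟩ := exists_fin_three_coloring_of_star ha hstar hV12K3 (hM1 a ha)
  have hmem : ∀ v, v ∉ V₃ → v ∈ V₁ ∪ V₂ := fun v hv₃ =>
    (Set.eq_univ_iff_forall.mp hcover v).resolve_right hv₃
  have hdeg : ∀ v ∈ V₃, (G.neighborSet v).encard < 3 := fun v hv =>
    (encard_le_two_of_subset_union
      (fun u _ => Set.union_union_distrib_right V₁ V₂ V₃ ▸ hcover ▸ Set.mem_univ u)
      (subsingleton_neighborSet_inter hV13K3 hV13P3 (Or.inr hv))
      (subsingleton_neighborSet_inter hV23K3 hV23P3 (Or.inr hv))).trans_lt (by norm_num)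
  exact (colorable_of_isIndepSet_of_encard_neighborSet_lt (S := V₃)
    (fun x hx y hy _ => hV3stable x hx y hy) c
    (fun u v hu hv => hc u v (hmem u hu) (hmem v hv)) hdeg).chromaticNumber_le

theorem chromatic_le_three_of_partition {V : Type*} [Fintype V] (G : SimpleGraph V)
    (V₁ V₂ V₃ : Set V)
    (h1ne : V₁.Nonempty) (h2ne : V₂.Nonempty) (h3ne : V₃.Nonempty)
    (hd12 : Disjoint V₁ V₂) (hd13 : Disjoint V₁ V₃) (hd23 : Disjoint V₂ V₃)
    (hcover : V₁ ∪ V₂ ∪ V₃ = Set.univ)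
    (hV1K3 : ¬ Contains (G.induce V₁) (completeGraph (Fin 3)))
    (hV1P3 : ¬ Contains (G.induce V₁) P3)
    (hV2K3 : ¬ Contains (G.induce V₂) (completeGraph (Fin 3)))
    (hV2P3 : ¬ Contains (G.induce V₂) P3)
    (hV3stable : ∀ x ∈ V₃, ∀ y ∈ V₃, ¬ G.Adj x y)
    (hV12K3 : ¬ Contains (G.induce (V₁ ∪ V₂)) (completeGraph (Fin 3)))
    (hV13K3 : ¬ Contains (G.induce (V₁ ∪ V₃)) (completeGraph (Fin 3)))
    (hV13P3 : ¬ Contains (G.induce (V₁ ∪ V₃)) P3)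
    (hV23K3 : ¬ Contains (G.induce (V₂ ∪ V₃)) (completeGraph (Fin 3)))
    (hV23P3 : ¬ Contains (G.induce (V₂ ∪ V₃)) P3)
    (hM1 : ∀ v ∈ V₁, ∀ x ∈ Mset G v \ V₁, ∀ y ∈ Mset G v \ V₁, ¬ G.Adj x y)
    (hM2 : ∀ v ∈ V₂, ∀ x ∈ Mset G v \ V₂, ∀ y ∈ Mset G v \ V₂, ¬ G.Adj x y)
    (hN1 : ∀ v ∈ V₃, (G.neighborSet v ∩ V₁).Nonempty →
      G.neighborSet v ∩ V₁ = {x ∈ V₁ | ¬ ∀ y ∈ G.neighborSet v ∩ V₂, G.Adj x y})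
    (hN2 : ∀ v ∈ V₃, (G.neighborSet v ∩ V₂).Nonempty →
      G.neighborSet v ∩ V₂ = {x ∈ V₂ | ¬ ∀ y ∈ G.neighborSet v ∩ V₁, G.Adj x y})
    (hone : ∀ a b c d : V, a ∈ V₁ → b ∈ V₁ → c ∈ V₁ → d ∈ V₁ →
      G.Adj a b → G.Adj c d → s(a,b) = s(c,d)) :
    G.chromaticNumber ≤ 3 :=
  chromatic_le_three_of_partition_general G V₁ V₂ V₃ h1ne hcover hV3stable hV12K3 hV13K3 hV13P3
    hV23K3 hV23P3 hM1 hone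
end

section
/- Let G be a (P₃∪P₂, K₄, K₃∪P₂, co-domino, co-A)-free graph and let D₁ := {x ∈ V(G) : ω(G − N(x)) ≤ 2}. If v₁, v₂ ∈ D₁ are nonadjacent, then at least one of the two induced subgraphs G[N(v₁) \ N(v₂)] and G[N(v₂) \ N(v₁)] contains no edge. -/
open SimpleGraph

/-!
An edge `ab` of `G[N(v₂) \ N(v₁)]` would form, together with `v₂`, a triangle among the vertices
not adjacent to `v₁`, contradicting `v₁ ∈ D₁`. So `G[N(v₂) \ N(v₁)]` is always edge-free.
-/

theorem SimpleGraph.three_le_cliqueNum_of_adj {α : Type*} [Finite α] {G : SimpleGraph α}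
    {a b c : α} (hab : G.Adj a b) (hac : G.Adj a c) (hbc : G.Adj b c) : 3 ≤ G.cliqueNum := by
  classical
  have h := is3Clique_triple_iff.2 ⟨hab, hac, hbc⟩
  exact h.card_eq ▸ h.isClique.card_le_cliqueNum

theorem not_adj_of_mem_neighborSet_sdiff_of_mem_D1 {V : Type*} [Finite V] {G : SimpleGraph V}
    {v₁ v₂ : V} (hv₁ : v₁ ∈ D1 G) (hnadj : ¬ G.Adj v₁ v₂) :
    ∀ a ∈ G.neighborSet v₂ \ G.neighborSet v₁,
      ∀ b ∈ G.neighborSet v₂ \ G.neighborSet v₁, ¬ G.Adj a b := by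
  rintro a ⟨ha₂, ha₁⟩ b ⟨hb₂, hb₁⟩ hab
  have h3 := three_le_cliqueNum_of_adj (G := G.induce {y | ¬ G.Adj v₁ y})
    (a := ⟨v₂, hnadj⟩) (b := ⟨a, ha₁⟩) (c := ⟨b, hb₁⟩) ha₂ hb₂ hab
  have h2 : (G.induce {y | ¬ G.Adj v₁ y}).cliqueNum ≤ 2 := hv₁
  omega

theorem one_side_edge_free_general {V : Type*} [Fintype V] (G : SimpleGraph V)
    (v₁ v₂ : V) (hv₁ : v₁ ∈ D1 G)
    (hnadj : ¬ G.Adj v₁ v₂) :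
    (∀ a ∈ G.neighborSet v₁ \ G.neighborSet v₂,
        ∀ b ∈ G.neighborSet v₁ \ G.neighborSet v₂, ¬ G.Adj a b) ∨
      (∀ a ∈ G.neighborSet v₂ \ G.neighborSet v₁,
        ∀ b ∈ G.neighborSet v₂ \ G.neighborSet v₁, ¬ G.Adj a b) :=
  Or.inr (not_adj_of_mem_neighborSet_sdiff_of_mem_D1 hv₁ hnadj)

theorem one_side_edge_free {V : Type*} [Fintype V] (G : SimpleGraph V)
    (hP : ¬ Contains G P3P2) (hK : ¬ Contains G (completeGraph (Fin 4)))
    (hK3P2 : ¬ Contains G K3P2) (hD : ¬ Contains G coDomino) (hA : ¬ Contains G coA)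
    (v₁ v₂ : V) (hv₁ : v₁ ∈ D1 G) (hv₂ : v₂ ∈ D1 G)
    (hne : v₁ ≠ v₂) (hnadj : ¬ G.Adj v₁ v₂) :
    (∀ a ∈ G.neighborSet v₁ \ G.neighborSet v₂,
        ∀ b ∈ G.neighborSet v₁ \ G.neighborSet v₂, ¬ G.Adj a b) ∨
      (∀ a ∈ G.neighborSet v₂ \ G.neighborSet v₁,
        ∀ b ∈ G.neighborSet v₂ \ G.neighborSet v₁, ¬ G.Adj a b) :=
  one_side_edge_free_general G v₁ v₂ hv₁ hnadj
end

section
/- Let G be a (P₃∪P₂, K₄, K₃∪P₂, co-A)-free graph and let v ∈ V(G) be a vertex such that the subgraph G − N(v) induced on the non-neighbors of v contains a triangle. Then χ(G[N(v)]) ≤ 3. -/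
open SimpleGraph

/-!
Fix a triangle `τ 0, τ 1, τ 2` among the non-neighbours of `v`. A neighbour `x` of `v` is adjacent
to some vertex of the triangle (otherwise `K₃ ∪ P₂`) but not to all three (otherwise `K₄`), so there
is a `t : Fin 3` with `x ~ τ t` and `x ≁ τ (t + 1)`; colour `x` by such a `t`. Two adjacent
neighbours of `v` of the same colour `t` would both see `τ t` and miss `τ (t + 1)`; according to
their adjacency to `τ (t + 2)` they would span a `K₄`, a co-A or a `K₃ ∪ P₂` together with `v`.
-/

section

variable {V : Type*} {G : SimpleGraph V}

-- `hH` says that `H` has no false twins, which forces `f` to be injective.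
theorem contains_of_adj_iff {W : Type*} {H : SimpleGraph W} (f : W → V)
    (hH : ∀ i j, i ≠ j → ¬ H.Adj i j → ∃ k, ¬ (H.Adj i k ↔ H.Adj j k))
    (hf : ∀ i j, G.Adj (f i) (f j) ↔ H.Adj i j) : Contains G H := by
  refine ⟨⟨⟨f, fun i j hij => ?_⟩, hf _ _⟩⟩
  by_contra hne
  by_cases hadj : H.Adj i j
  · exact G.irrefl (hij ▸ (hf i j).2 hadj)
  · obtain ⟨k, hk⟩ := hH i j hne hadj
    exact hk (by rw [← hf, ← hf, hij])

theorem contains_K4_of_adj {p q r s : V}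
    (hpq : G.Adj p q) (hpr : G.Adj p r) (hps : G.Adj p s)
    (hqr : G.Adj q r) (hqs : G.Adj q s) (hrs : G.Adj r s) :
    Contains G (completeGraph (Fin 4)) :=
  contains_of_adj_iff ![p, q, r, s] (fun _ _ hne hadj => (hadj hne).elim) <| by
    intro i j
    fin_cases i <;> fin_cases j <;> simp [G.adj_comm, *]

theorem contains_K3P2_of_adj {p q r s t : V}
    (hpq : G.Adj p q) (hpr : G.Adj p r) (hqr : G.Adj q r) (hst : G.Adj s t)
    (hps : ¬G.Adj p s) (hpt : ¬G.Adj p t) (hqs : ¬G.Adj q s) (hqt : ¬G.Adj q t)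
    (hrs : ¬G.Adj r s) (hrt : ¬G.Adj r t) : Contains G K3P2 :=
  contains_of_adj_iff ![p, q, r, s, t] (by unfold K3P2; decide) <| by
    intro i j
    fin_cases i <;> fin_cases j <;> simp [K3P2, G.adj_comm, *]

theorem contains_coA_of_adj {p₀ p₁ p₂ p₃ p₄ p₅ : V}
    (h01 : G.Adj p₀ p₁) (h12 : G.Adj p₁ p₂) (h23 : G.Adj p₂ p₃) (h34 : G.Adj p₃ p₄)
    (h45 : G.Adj p₄ p₅) (h05 : G.Adj p₀ p₅) (h13 : G.Adj p₁ p₃) (h04 : G.Adj p₀ p₄)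
    (h03 : G.Adj p₀ p₃) (h02 : ¬G.Adj p₀ p₂) (h14 : ¬G.Adj p₁ p₄) (h15 : ¬G.Adj p₁ p₅)
    (h24 : ¬G.Adj p₂ p₄) (h25 : ¬G.Adj p₂ p₅) (h35 : ¬G.Adj p₃ p₅) :
    Contains G coA :=
  contains_of_adj_iff ![p₀, p₁, p₂, p₃, p₄, p₅]
    (by simp only [coA, fromEdgeSet_adj, Set.mem_insert_iff, Set.mem_singleton_iff]; decide) <| by
    intro i j
    fin_cases i <;> fin_cases j <;> simp [coA, G.adj_comm, *]

theorem adj_triangle_of_adj (hK3P2 : ¬ Contains G K3P2) {v a b c x : V}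
    (hab : G.Adj a b) (hac : G.Adj a c) (hbc : G.Adj b c)
    (hva : ¬ G.Adj v a) (hvb : ¬ G.Adj v b) (hvc : ¬ G.Adj v c) (hvx : G.Adj v x) :
    G.Adj x a ∨ G.Adj x b ∨ G.Adj x c := by
  by_contra! h
  obtain ⟨hxa, hxb, hxc⟩ := h
  exact hK3P2 <| contains_K3P2_of_adj hab hac hbc hvx (mt Adj.symm hva) (mt Adj.symm hxa)
    (mt Adj.symm hvb) (mt Adj.symm hxb) (mt Adj.symm hvc) (mt Adj.symm hxc)

theorem not_adj_of_common_adj_of_common_nonadj (hK : ¬ Contains G (completeGraph (Fin 4)))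
    (hK3P2 : ¬ Contains G K3P2) (hA : ¬ Contains G coA) {v a b c x y : V}
    (hab : G.Adj a b) (hac : G.Adj a c) (hbc : G.Adj b c)
    (hva : ¬ G.Adj v a) (hvb : ¬ G.Adj v b) (hvc : ¬ G.Adj v c)
    (hvx : G.Adj v x) (hvy : G.Adj v y) (hxa : G.Adj x a) (hya : G.Adj y a)
    (hxc : ¬ G.Adj x c) (hyc : ¬ G.Adj y c) : ¬ G.Adj x y := by
  intro hxy
  by_cases hxb : G.Adj x b <;> by_cases hyb : G.Adj y b
  · exact hK <| contains_K4_of_adj hab hxa.symm hya.symm hxb.symm hyb.symm hxy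
  · exact hA <| contains_coA_of_adj hya.symm hvy.symm hvx hxb hbc hac hxy.symm hab hxa.symm
      (mt Adj.symm hva) hyb hyc hvb hvc hxc
  · exact hA <| contains_coA_of_adj hxa.symm hvx.symm hvy hyb hbc hac hxy hab hya.symm
      (mt Adj.symm hva) hxb hxc hvb hvc hyc
  · exact hK3P2 <| contains_K3P2_of_adj hvx hvy hxy hbc hvb hvc hxb hxc hyb hyc

open Fin.NatCast in
theorem Fin.exists_and_not_add_one {n : ℕ} [NeZero n] {p : Fin n → Prop} {i j : Fin n}
    (hi : p i) (hj : ¬ p j) : ∃ t, p t ∧ ¬ p (t + 1) := by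
  by_contra! h
  have hp : ∀ k : ℕ, p (i + (k : Fin n)) := by
    intro k
    induction k with
    | zero => simpa using hi
    | succ k ih => simpa [add_assoc] using h _ ih
  exact hj (by simpa using hp (j - i).val)

theorem colorable_induce_neighborSet (hK : ¬ Contains G (completeGraph (Fin 4)))
    (hK3P2 : ¬ Contains G K3P2) (hA : ¬ Contains G coA) {v : V}
    (τ : completeGraph (Fin 3) ↪g G) (hvτ : ∀ i, ¬ G.Adj v (τ i)) :
    (G.induce (G.neighborSet v)).Colorable 3 := by
  have hτ (i j : Fin 3) (hij : i ≠ j) : G.Adj (τ i) (τ j) := τ.map_adj_iff.2 hij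
  have hcolor (x : G.neighborSet v) : ∃ t, G.Adj x (τ t) ∧ ¬ G.Adj x (τ (t + 1)) := by
    obtain ⟨i, hi⟩ : ∃ i, G.Adj x (τ i) := by
      rcases adj_triangle_of_adj hK3P2 (hτ 0 1 (by decide)) (hτ 0 2 (by decide))
        (hτ 1 2 (by decide)) (hvτ 0) (hvτ 1) (hvτ 2) x.2 with h | h | h
      exacts [⟨0, h⟩, ⟨1, h⟩, ⟨2, h⟩]
    obtain ⟨j, hj⟩ : ∃ j, ¬ G.Adj x (τ j) := by
      by_contra! h
      exact hK <| contains_K4_of_adj (hτ 0 1 (by decide)) (hτ 0 2 (by decide))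
        (h 0).symm (hτ 1 2 (by decide)) (h 1).symm (h 2).symm
    exact Fin.exists_and_not_add_one hi hj
  choose color hcolor using hcolor
  refine ⟨Coloring.mk color fun {x y} hxy hxy_eq => ?_⟩
  obtain ⟨hxa, hxc⟩ := hcolor x
  obtain ⟨hya, hyc⟩ := hcolor y
  rw [hxy_eq] at hxa hxc
  have hne : ∀ t : Fin 3, t ≠ t + 2 ∧ t ≠ t + 1 ∧ t + 2 ≠ t + 1 := by decide
  obtain ⟨h02, h01, h21⟩ := hne (color y)
  exact not_adj_of_common_adj_of_common_nonadj hK hK3P2 hA (hτ _ _ h02) (hτ _ _ h01) (hτ _ _ h21)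
    (hvτ _) (hvτ _) (hvτ _) x.2 y.2 hxa hya hxc hyc hxy

end

theorem chromatic_nbhd_le_three_general {V : Type*} (G : SimpleGraph V)
    (hK : ¬ Contains G (completeGraph (Fin 4)))
    (hK3P2 : ¬ Contains G K3P2) (hA : ¬ Contains G coA)
    (v : V)
    (htri : Contains (G.induce {y : V | ¬ G.Adj v y}) (completeGraph (Fin 3))) :
    (G.induce (G.neighborSet v)).chromaticNumber ≤ 3 := by
  obtain ⟨e⟩ := htri
  have hcol := colorable_induce_neighborSet hK hK3P2 hA ((Embedding.induce _).comp e)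
    fun i => (e i).2
  exact_mod_cast hcol.chromaticNumber_le

theorem chromatic_nbhd_le_three {V : Type*} [Fintype V] (G : SimpleGraph V)
    (hP : ¬ Contains G P3P2) (hK : ¬ Contains G (completeGraph (Fin 4)))
    (hK3P2 : ¬ Contains G K3P2) (hA : ¬ Contains G coA)
    (v : V)
    (htri : Contains (G.induce {y : V | ¬ G.Adj v y}) (completeGraph (Fin 3))) :
    (G.induce (G.neighborSet v)).chromaticNumber ≤ 3 :=
  chromatic_nbhd_le_three_general G hK hK3P2 hA v htri
end

section
/- Let G be a (P₃∪P₂, K₄)-free graph, let D₁ := {x ∈ V(G) : ω(G − N(x)) ≤ 2}, and let v₁, v₂, v₃ ∈ D₁ be such that v₁ is adjacent to v₂ and v₃ is adjacent to neither v₁ nor v₂. Then χ(G[N(v₁) ∪ N(v₂)]) ≤ 5. -/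
open SimpleGraph

/-! An edge inside `N(v₁) ∩ N(v₂)` would span a `K₄` with `v₁v₂`, so that set is independent.
`N(v₁) \ N(v₂)` is bipartite, split by adjacency to `v₃`: an edge `ab` inside `N(v₃)` spans the
triangle `abv₃`, which misses `N(v₂)`, and an edge outside `N(v₃)` spans the triangle `abv₁`,
which misses `N(v₃)`; both contradict `v₂, v₃ ∈ D₁`. Symmetrically `N(v₂) \ N(v₁)` is
bipartite, so `1 + 2 + 2` colours suffice. -/

namespace SimpleGraph

variable {V : Type*} {G : SimpleGraph V}

theorem cliqueFree_of_cliqueNum_lt [Finite V] {n : ℕ} (h : G.cliqueNum < n) :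
    G.CliqueFree n := fun s hs => by
  have := IsClique.card_le_cliqueNum (tc := hs.isClique)
  rw [hs.card_eq] at this
  omega

theorem CliqueFree.not_adj_of_mem_commonNeighbors {u v a b : V} (hG : G.CliqueFree 4)
    (huv : G.Adj u v) (ha : a ∈ G.commonNeighbors u v) (hb : b ∈ G.commonNeighbors u v) :
    ¬ G.Adj a b := fun hab => by
  classical
  refine hG _ <| (is3Clique_triple_iff.2 ⟨huv, ha.1, ha.2⟩).insert (a := b) ?_
  simp only [Finset.mem_insert, Finset.mem_singleton, forall_eq_or_imp, forall_eq]
  exact ⟨hb.1.symm, hb.2.symm, hab.symm⟩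

theorem adj_of_mem_D1 [Finite V] {x a b c : V} (hx : x ∈ D1 G)
    (hab : G.Adj a b) (hac : G.Adj a c) (hbc : G.Adj b c)
    (hxa : ¬ G.Adj x a) (hxb : ¬ G.Adj x b) : G.Adj x c := by
  classical
  by_contra hxc
  refine cliqueFree_of_cliqueNum_lt (Nat.lt_succ_of_le hx)
    {⟨a, hxa⟩, ⟨b, hxb⟩, ⟨c, hxc⟩} ?_
  exact is3Clique_triple_iff.2 ⟨hab, hac, hbc⟩

theorem adj_iff_not_adj_of_mem_D1 [Finite V] {u w z a b : V} (hw : w ∈ D1 G) (hz : z ∈ D1 G)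
    (hzu : ¬ G.Adj z u) (hzw : ¬ G.Adj z w) (hua : G.Adj u a) (hub : G.Adj u b)
    (hwa : ¬ G.Adj w a) (hwb : ¬ G.Adj w b) (hab : G.Adj a b) :
    G.Adj z a ↔ ¬ G.Adj z b := by
  constructor
  · exact fun hza hzb => hzw (adj_of_mem_D1 hw hab hza.symm hzb.symm hwa hwb).symm
  · exact fun hzb => by_contra fun hza => hzu (adj_of_mem_D1 hz hab hua.symm hub.symm hza hzb)

theorem colorable_induce_neighborSet_union [Finite V] (hK : G.CliqueFree 4)
    {v₁ v₂ v₃ : V} (hv₁ : v₁ ∈ D1 G) (hv₂ : v₂ ∈ D1 G) (hv₃ : v₃ ∈ D1 G)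
    (hadj : G.Adj v₁ v₂) (hn1 : ¬ G.Adj v₃ v₁) (hn2 : ¬ G.Adj v₃ v₂) :
    (G.induce (G.neighborSet v₁ ∪ G.neighborSet v₂)).Colorable 5 := by
  classical
  suffices (G.induce (G.neighborSet v₁ ∪ G.neighborSet v₂)).Coloring (Option (Bool × Bool)) from
    this.colorable
  refine Coloring.mk (fun x =>
    if G.Adj v₁ x ∧ G.Adj v₂ x then none else some (G.Adj v₁ x, G.Adj v₃ x)) ?_
  rintro ⟨a, ha⟩ ⟨b, hb⟩ (hab : G.Adj a b) heq
  simp only [Set.mem_union, mem_neighborSet] at ha hb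
  by_cases h12a : G.Adj v₁ a ∧ G.Adj v₂ a <;> by_cases h12b : G.Adj v₁ b ∧ G.Adj v₂ b
  · exact hK.not_adj_of_mem_commonNeighbors hadj h12a h12b hab
  · simp [h12a, h12b] at heq
  · simp [h12a, h12b] at heq
  simp only [h12a, h12b, if_false, Option.some.injEq, Prod.mk.injEq, decide_eq_decide] at heq
  obtain ⟨h1, h3⟩ := heq
  by_cases h1a : G.Adj v₁ a
  · have := adj_iff_not_adj_of_mem_D1 hv₂ hv₃ hn1 hn2 h1a (h1.1 h1a)
      (fun h => h12a ⟨h1a, h⟩) (fun h => h12b ⟨h1.1 h1a, h⟩) hab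
    exact iff_not_self (h3.symm.trans this)
  · have h1b : ¬ G.Adj v₁ b := fun h => h1a (h1.2 h)
    have := adj_iff_not_adj_of_mem_D1 hv₁ hv₃ hn2 hn1 (ha.resolve_left h1a)
      (hb.resolve_left h1b) h1a h1b hab
    exact iff_not_self (h3.symm.trans this)

end SimpleGraph

theorem chromatic_union_nbhd_le_five_general {V : Type*} [Fintype V] (G : SimpleGraph V)
    (hK : ¬ Contains G (completeGraph (Fin 4)))
    (v₁ v₂ v₃ : V) (hv₁ : v₁ ∈ D1 G) (hv₂ : v₂ ∈ D1 G) (hv₃ : v₃ ∈ D1 G)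
    (hadj : G.Adj v₁ v₂)
    (hn1 : ¬ G.Adj v₃ v₁) (hn2 : ¬ G.Adj v₃ v₂) :
    (G.induce (G.neighborSet v₁ ∪ G.neighborSet v₂)).chromaticNumber ≤ 5 :=
  (colorable_induce_neighborSet_union (cliqueFree_of_not_contains hK)
    hv₁ hv₂ hv₃ hadj hn1 hn2).chromaticNumber_le

theorem chromatic_union_nbhd_le_five {V : Type*} [Fintype V] (G : SimpleGraph V)
    (hP : ¬ Contains G P3P2) (hK : ¬ Contains G (completeGraph (Fin 4)))
    (v₁ v₂ v₃ : V) (hv₁ : v₁ ∈ D1 G) (hv₂ : v₂ ∈ D1 G) (hv₃ : v₃ ∈ D1 G)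
    (hadj : G.Adj v₁ v₂) (h31 : v₃ ≠ v₁) (h32 : v₃ ≠ v₂)
    (hn1 : ¬ G.Adj v₃ v₁) (hn2 : ¬ G.Adj v₃ v₂) :
    (G.induce (G.neighborSet v₁ ∪ G.neighborSet v₂)).chromaticNumber ≤ 5 :=
  chromatic_union_nbhd_le_five_general G hK v₁ v₂ v₃ hv₁ hv₂ hv₃ hadj hn1 hn2
end
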